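/- Let Ω ⊂ ℝⁿ be a proper open convex domain with Funk metric F_Ω, x ∈ Ω, and ρ > 0. Then the forward open ball B⁺(x,ρ) = {y ∈ Ω : F_Ω(x,y) < ρ} equals the image of Ω under the homothety centered at x with ratio 1 − e^{−ρ}, i.e., B⁺(x,ρ) = x + (1 − e^{−ρ})(Ω − x). -/

import Mathlib

open Real
open scoped Classical

/-- The Funk weak metric on a domain `Ω ⊆ ℝⁿ`: if the ray from `x` through `y`
meets the boundary `∂Ω` at a point `a = x + t • (y - x)` with `t ≥ 1`, then
`F_Ω(x,y) = log (|x - a| / |y - a|)`; otherwise (in particular if the ray is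
contained in `Ω`, or if `x = y`) it is `0`. -/
noncomputable def funk {n : ℕ} (Ω : Set (EuclideanSpace ℝ (Fin n)))
    (x y : EuclideanSpace ℝ (Fin n)) : ℝ :=
  if h : ∃ t : ℝ, 1 ≤ t ∧ x + t • (y - x) ∈ frontier Ω then
    Real.log (dist x (x + h.choose • (y - x)) / dist y (x + h.choose • (y - x)))
  else 0

/-!
If the ray from `x` through `y ∈ Ω` leaves `Ω` at `x + t₀ • (y - x)`, convexity of `Ω` shows
that `x + s • (y - x) ∈ Ω` exactly for `0 ≤ s < t₀`, and `F_Ω(x, y) = log (t₀ / (t₀ - 1))`,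
which is `< ρ` exactly when `t₀ > (1 - e^{-ρ})⁻¹`. So `F_Ω(x, y) < ρ` iff
`x + (1 - e^{-ρ})⁻¹ • (y - x) ∈ Ω`, i.e. iff `y` is the image of a point of `Ω` under the
homothety. If the ray never leaves `Ω`, then `F_Ω(x, y) = 0 < ρ` and, by connectedness of the
ray, that point lies in `Ω` too.
-/

open Set

section Ray

variable {E : Type*} [AddCommGroup E] [Module ℝ E] [TopologicalSpace E] {Ω : Set E} {x y : E}

lemma add_smul_sub_mem_of_forall_notMem_frontier [ContinuousAdd E] [ContinuousSMul ℝ E]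
    (hΩ : IsOpen Ω) (hy : y ∈ Ω) (h : ∀ t : ℝ, 1 ≤ t → x + t • (y - x) ∉ frontier Ω)
    {s : ℝ} (hs : 1 ≤ s) : x + s • (y - x) ∈ Ω := by
  let ray : ℝ → E := fun t => x + t • (y - x)
  have hray : Continuous ray := by fun_prop
  have hsub : ray '' Ici 1 ⊆ Ω := by
    refine (isPreconnected_Ici.image ray hray.continuousOn).subset_of_closure_inter_subset hΩ
      ⟨y, ⟨1, self_mem_Ici, by simp [ray]⟩, hy⟩ ?_
    rintro _ ⟨hcl, t, ht, rfl⟩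
    rw [closure_eq_self_union_frontier] at hcl
    exact hcl.resolve_right (h t ht)
  exact hsub ⟨s, hs, rfl⟩

lemma add_smul_sub_mem_iff_lt_of_mem_frontier [IsTopologicalAddGroup E] [ContinuousConstSMul ℝ E]
    (hΩ : IsOpen Ω) (hconv : Convex ℝ Ω) (hx : x ∈ Ω) {t₀ s : ℝ} (ht₀ : 0 ≤ t₀)
    (hfr : x + t₀ • (y - x) ∈ frontier Ω) (hs : 0 ≤ s) :
    x + s • (y - x) ∈ Ω ↔ s < t₀ := by
  set w := x + t₀ • (y - x)
  have hw : w ∉ Ω := fun hwΩ => hΩ.inter_frontier_eq.subset ⟨hwΩ, hfr⟩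
  constructor
  · intro hsΩ
    by_contra! hle
    rcases ht₀.eq_or_lt with rfl | ht₀pos
    · exact hw (by simpa [w] using hx)
    have hmem := hconv.add_smul_sub_mem hx hsΩ
      ⟨div_nonneg ht₀ hs, div_le_one_of_le₀ hle hs⟩
    rw [add_sub_cancel_left, smul_smul, div_mul_cancel₀ _ (ht₀pos.trans_le hle).ne'] at hmem
    exact hw hmem
  · intro hst
    have ht₀pos : 0 < t₀ := hs.trans_lt hst
    set b := s / t₀
    have hmem := hconv.add_smul_sub_mem_interior' (frontier_subset_closure hfr)
      (hΩ.interior_eq.symm ▸ hx) (t := 1 - b)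
      ⟨by linarith [(div_lt_one ht₀pos).mpr hst], by linarith [div_nonneg hs ht₀]⟩
    rw [hΩ.interior_eq] at hmem
    convert hmem using 1
    rw [show s = b * t₀ from (div_mul_cancel₀ s ht₀pos.ne').symm, mul_smul]
    simp only [w]
    module

end Ray

lemma dist_div_dist_add_smul_sub {E : Type*} [NormedAddCommGroup E] [NormedSpace ℝ E]
    {x y : E} (hxy : y ≠ x) {t : ℝ} (ht : 1 ≤ t) :
    dist x (x + t • (y - x)) / dist y (x + t • (y - x)) = t / (t - 1) := by
  have hy : y - (x + t • (y - x)) = (1 - t) • (y - x) := by module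
  rw [dist_self_add_right, dist_eq_norm, hy, norm_smul, norm_smul, Real.norm_eq_abs,
    Real.norm_eq_abs, abs_of_nonneg (by linarith), abs_of_nonpos (by linarith), neg_sub,
    mul_div_mul_right _ _ (norm_ne_zero_iff.mpr (sub_ne_zero.mpr hxy))]

lemma one_sub_exp_neg_pos {ρ : ℝ} (hρ : 0 < ρ) : 0 < 1 - exp (-ρ) :=
  sub_pos.mpr (exp_lt_one_iff.mpr (neg_lt_zero.mpr hρ))

lemma log_div_sub_one_lt_iff {t ρ : ℝ} (ht : 1 < t) (hρ : 0 < ρ) :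
    log (t / (t - 1)) < ρ ↔ (1 - exp (-ρ))⁻¹ < t := by
  rw [log_lt_iff_lt_exp (div_pos (by linarith) (by linarith)), div_lt_iff₀ (by linarith),
    inv_lt_iff_one_lt_mul₀' (one_sub_exp_neg_pos hρ), exp_neg]
  have key : (1 - (exp ρ)⁻¹) * t = 1 + (exp ρ * (t - 1) - t) / exp ρ := by
    field_simp
    ring
  rw [key, lt_add_iff_pos_right, div_pos_iff_of_pos_right (exp_pos ρ), sub_pos]

lemma mem_image_add_smul_sub_iff {K E : Type*} [Field K] [AddCommGroup E] [Module K E]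
    {s : Set E} {x y : E} {c : K} (hc : c ≠ 0) :
    y ∈ (fun z => x + c • (z - x)) '' s ↔ x + c⁻¹ • (y - x) ∈ s := by
  constructor
  · rintro ⟨z, hz, rfl⟩
    simpa [smul_smul, inv_mul_cancel₀ hc] using hz
  · exact fun h => ⟨_, h, by simp [smul_smul, mul_inv_cancel₀ hc]⟩

lemma funk_lt_iff {n : ℕ} {Ω : Set (EuclideanSpace ℝ (Fin n))} (hΩ : IsOpen Ω)
    (hconv : Convex ℝ Ω) {x y : EuclideanSpace ℝ (Fin n)} (hx : x ∈ Ω) (hy : y ∈ Ω)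
    {ρ : ℝ} (hρ : 0 < ρ) :
    funk Ω x y < ρ ↔ x + (1 - exp (-ρ))⁻¹ • (y - x) ∈ Ω := by
  have hs : 1 ≤ (1 - exp (-ρ))⁻¹ :=
    (one_le_inv₀ (one_sub_exp_neg_pos hρ)).mpr (sub_le_self _ (exp_pos _).le)
  unfold funk
  split_ifs with h
  · set t₀ := h.choose
    obtain ⟨ht₀, hfr⟩ : 1 ≤ t₀ ∧ x + t₀ • (y - x) ∈ frontier Ω := h.choose_spec
    have hw : x + t₀ • (y - x) ∉ Ω := fun hw => hΩ.inter_frontier_eq.subset ⟨hw, hfr⟩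
    have hxy : y ≠ x := by
      rintro rfl
      exact hw (by simpa using hx)
    have ht₀' : 1 < t₀ := ht₀.lt_of_ne fun h1 => hw (by simpa [← h1] using hy)
    rw [dist_div_dist_add_smul_sub hxy ht₀, log_div_sub_one_lt_iff ht₀' hρ,
      add_smul_sub_mem_iff_lt_of_mem_frontier hΩ hconv hx (by linarith) hfr (by linarith)]
  · push Not at h
    exact iff_of_true hρ (add_smul_sub_mem_of_forall_notMem_frontier hΩ hy h hs)

theorem funk_forward_ball_homothety_general {n : ℕ} (Ω : Set (EuclideanSpace ℝ (Fin n)))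
    (hopen : IsOpen Ω) (hconv : Convex ℝ Ω)
    (x : EuclideanSpace ℝ (Fin n)) (hx : x ∈ Ω) (ρ : ℝ) (hρ : 0 < ρ) :
    {y ∈ Ω | funk Ω x y < ρ}
      = (fun z => x + (1 - Real.exp (-ρ)) • (z - x)) '' Ω := by
  have hc0 : 0 < 1 - exp (-ρ) := one_sub_exp_neg_pos hρ
  ext y
  rw [mem_image_add_smul_sub_iff hc0.ne']
  refine ⟨fun ⟨hy, hlt⟩ => (funk_lt_iff hopen hconv hx hy hρ).mp hlt, fun hz => ?_⟩
  have hy : y ∈ Ω := by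
    simpa [smul_smul, mul_inv_cancel₀ hc0.ne'] using
      hconv.add_smul_sub_mem hx hz ⟨hc0.le, sub_le_self _ (exp_pos _).le⟩
  exact ⟨hy, (funk_lt_iff hopen hconv hx hy hρ).mpr hz⟩

theorem funk_forward_ball_homothety {n : ℕ} (Ω : Set (EuclideanSpace ℝ (Fin n)))
    (hopen : IsOpen Ω) (hconv : Convex ℝ Ω) (hne : Ω.Nonempty) (hproper : Ω ≠ Set.univ)
    (x : EuclideanSpace ℝ (Fin n)) (hx : x ∈ Ω) (ρ : ℝ) (hρ : 0 < ρ) :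
    {y ∈ Ω | funk Ω x y < ρ}
      = (fun z => x + (1 - Real.exp (-ρ)) • (z - x)) '' Ω :=
  funk_forward_ball_homothety_general Ω hopen hconv x hx ρ hρ
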